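/- Let b and β be admissible drifts. Then the function L₁ : [0,1] → [0,∞] defined by L₁(t) = G₁((1-t)b + tβ) is convex, i.e., G₁((1-t)b + tβ) ≤ (1-t)·G₁(b) + t·G₁(β) for all t ∈ [0,1]. -/

import Mathlib

open MeasureTheory Set Real
open scoped ENNReal

noncomputable section

namespace DiffusiveSearch

/-- `b` is piecewise continuous and locally bounded on `s`. -/
def PCLB (b : ℝ → ℝ) (s : Set ℝ) : Prop :=
  (∃ E : Set ℝ, E.Countable ∧ ContinuousOn b (s \ E)) ∧
  ∀ K : Set ℝ, IsCompact K → K ⊆ s → ∃ M : ℝ, ∀ x ∈ K, |b x| ≤ M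

/-- The left edge `A₋(μ)` of the support of the negative part of the target
distribution: `inf {x < 0 : μ₋((-∞,x]) > 0}`, as an extended real number. -/
def Aminus (ν : Measure ℝ) : EReal :=
  sInf ((fun x : ℝ => (x : EReal)) '' {x : ℝ | x < 0 ∧ 0 < ν (Iic x)})

/-- The right edge `A₊(μ)` of the support of the positive part of the target
distribution: `sup {x > 0 : μ₊([x,∞)) > 0}`, as an extended real number. -/
def Aplus (ν : Measure ℝ) : EReal :=
  sSup ((fun x : ℝ => (x : EReal)) '' {x : ℝ | 0 < x ∧ 0 < ν (Ici x)})

/-- The open real interval with extended-real endpoints. -/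
def io (l r : EReal) : Set ℝ := {x : ℝ | l < (x : EReal) ∧ (x : EReal) < r}

/-- `∫_0^x b(y) dy`. -/
def Bint (b : ℝ → ℝ) (x : ℝ) : ℝ := ∫ y in (0:ℝ)..x, b y

/-- The scale weight `exp((2/D)∫_0^x b(y) dy)`, as an extended nonnegative real. -/
def w (D : ℝ) (b : ℝ → ℝ) (x : ℝ) : ℝ≥0∞ := ENNReal.ofReal (Real.exp ((2/D) * Bint b x))

/-- `b` is an admissible drift: piecewise continuous and locally bounded on
`(A₋, A₊)`, with finite scale integral (positive recurrence). -/
def Admissible (D : ℝ) (Am Ap : EReal) (b : ℝ → ℝ) : Prop :=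
  PCLB b (io Am Ap) ∧ (∫⁻ x in io Am Ap, w D b x) < ⊤

/-- The tail `μ̄₋(x) = μ₋((-∞,x))`. -/
def tailm (μm : Measure ℝ) (x : ℝ) : ℝ := (μm (Iio x)).toReal

/-- The tail `μ̄₊(x) = μ₊((x,∞))`. -/
def tailp (μp : Measure ℝ) (x : ℝ) : ℝ := (μp (Ioi x)).toReal

/-- The functional `G₁(b)`; `(2/D)·G₁(b)` is the expected search time. -/
def G1 (D p : ℝ) (μm μp : Measure ℝ) (b : ℝ → ℝ) : ℝ≥0∞ :=
  ENNReal.ofReal (1 - p) *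
    ∫⁻ a in io (Aminus μm) 0,
      ENNReal.ofReal (tailm μm a * Real.exp (-(2/D) * Bint b a)) *
        (∫⁻ z in io (a : EReal) (Aplus μp), w D b z)
  + ENNReal.ofReal p *
    ∫⁻ a in io 0 (Aplus μp),
      ENNReal.ofReal (tailp μp a * Real.exp (-(2/D) * Bint b a)) *
        (∫⁻ z in io (Aminus μm) (a : EReal), w D b z)

/-- `I₋ = ∫_{A₋(μ)}^0 μ̄₋(x)^{1/2} dx`, with values in `[0,∞]`. -/
def Im (μm : Measure ℝ) : ℝ≥0∞ :=
  ∫⁻ x in io (Aminus μm) 0, ENNReal.ofReal (Real.sqrt (tailm μm x))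

/-- `I₊ = ∫_0^{A₊(μ)} μ̄₊(x)^{1/2} dx`, with values in `[0,∞]`. -/
def Ip (μp : Measure ℝ) : ℝ≥0∞ :=
  ∫⁻ x in io 0 (Aplus μp), ENNReal.ofReal (Real.sqrt (tailp μp x))

/-- The square root balance condition: `I₋, I₊` finite and
`I₊/I₋ = ((1-p)·log(1-p))/(p·log p)`. -/
def SRBC (p : ℝ) (μm μp : Measure ℝ) : Prop :=
  Im μm ≠ ⊤ ∧ Ip μp ≠ ⊤ ∧
    (Ip μp).toReal / (Im μm).toReal = ((1 - p) * Real.log (1 - p)) / (p * Real.log p)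

/-- The value `V(μ) = (2/D)·[((1-p)/|log p|)·I₋² + (p/|log(1-p)|)·I₊²]`. -/
def Vval (D p : ℝ) (μm μp : Measure ℝ) : ℝ :=
  (2/D) * (((1 - p) / |Real.log p|) * ((Im μm).toReal)^2
    + (p / |Real.log (1 - p)|) * ((Ip μp).toReal)^2)

/-- The candidate optimal drift `b₀`, expressed through densities `fm` of `μ₋`
and `fp` of `μ₊` (so that `μ̄₋' = fm` and `μ̄₊' = -fp`). -/
def b0 (D p : ℝ) (μm μp : Measure ℝ) (fm fp : ℝ → ℝ) (x : ℝ) : ℝ :=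
  if x < 0 then
    D * ((1/4) * (fm x / tailm μm x)
      - |Real.log p| / (2 * (Im μm).toReal) * Real.sqrt (tailm μm x))
  else
    D * ((1/4) * (-(fp x) / tailp μp x)
      + |Real.log (1 - p)| / (2 * (Ip μp).toReal) * Real.sqrt (tailp μp x))

/-- `μ₋` restricted to `(A₋(μ),0)` is absolutely continuous with piecewise
continuous, locally bounded density `fm`. -/
def NiceDensityM (μm : Measure ℝ) (fm : ℝ → ℝ) : Prop :=
  PCLB fm (io (Aminus μm) 0) ∧
    μm.restrict (io (Aminus μm) 0) =
      (volume.restrict (io (Aminus μm) 0)).withDensity (fun x => ENNReal.ofReal (fm x))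

/-- `μ₊` restricted to `(0,A₊(μ))` is absolutely continuous with piecewise
continuous, locally bounded density `fp`. -/
def NiceDensityP (μp : Measure ℝ) (fp : ℝ → ℝ) : Prop :=
  PCLB fp (io 0 (Aplus μp)) ∧
    μp.restrict (io 0 (Aplus μp)) =
      (volume.restrict (io 0 (Aplus μp))).withDensity (fun x => ENNReal.ofReal (fp x))

/-
Along the segment `(1-t)b + tβ` the primitive `B = ∫₀ˣ drift` is affine in `t`, since
admissible drifts are locally integrable on `(A₋, A₊) ∋ 0`. Every integrand of `G₁` has the
form `μ̄(a) exp((2/D)(B(z) - B(a)))`, the exponential of an affine function of `t`, hence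
convex in `t`; monotonicity and linearity of the Lebesgue integral carry this convexity
through both integrations.
-/

open Filter Topology

theorem isOpen_io (l r : EReal) : IsOpen (io l r) :=
  isOpen_Ioo.preimage continuous_coe_real_ereal

theorem measurableSet_io {l r : EReal} : MeasurableSet (io l r) :=
  (isOpen_io l r).measurableSet

instance (l r : EReal) : (io l r).OrdConnected :=
  ordConnected_Ioo.preimage_mono fun _ _ h => EReal.coe_le_coe_iff.2 h

theorem io_mono_right (l : EReal) : Monotone fun a : ℝ => io l a :=
  fun _ _ h _ hz => ⟨hz.1, hz.2.trans_le (EReal.coe_le_coe_iff.2 h)⟩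

theorem io_anti_left (r : EReal) : Antitone fun a : ℝ => io a r :=
  fun _ _ h _ hz => ⟨(EReal.coe_le_coe_iff.2 h).trans_lt hz.1, hz.2⟩

theorem io_subset_io {l r l' r' : EReal} (hl : l ≤ l') (hr : r' ≤ r) : io l' r' ⊆ io l r :=
  fun _ hx => ⟨hl.trans_lt hx.1, hx.2.trans_le hr⟩

theorem Monotone.measurable_setLIntegral {α : Type*} [MeasurableSpace α] {S : ℝ → Set α}
    (hS : Monotone S) (g : α → ℝ≥0∞) (μ : Measure α) :
    Measurable fun a => ∫⁻ z in S a, g z ∂μ :=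
  Monotone.measurable fun _ _ h => lintegral_mono_set (hS h)

theorem Antitone.measurable_setLIntegral {α : Type*} [MeasurableSpace α] {S : ℝ → Set α}
    (hS : Antitone S) (g : α → ℝ≥0∞) (μ : Measure α) :
    Measurable fun a => ∫⁻ z in S a, g z ∂μ :=
  Antitone.measurable fun _ _ h => lintegral_mono_set (hS h)

theorem measurable_tailm (μ : Measure ℝ) : Measurable (tailm μ) :=
  (Monotone.measurable fun _ _ h => measure_mono (Iio_subset_Iio h)).ennreal_toReal

theorem measurable_tailp (μ : Measure ℝ) : Measurable (tailp μ) :=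
  (Antitone.measurable fun _ _ h => measure_mono (Ioi_subset_Ioi h)).ennreal_toReal

theorem tailm_nonneg (μ : Measure ℝ) (x : ℝ) : 0 ≤ tailm μ x := ENNReal.toReal_nonneg

theorem tailp_nonneg (μ : Measure ℝ) (x : ℝ) : 0 ≤ tailp μ x := ENNReal.toReal_nonneg

theorem Aminus_neg {ν : Measure ℝ} (hν : ν (Iio 0) ≠ 0) : Aminus ν < 0 := by
  have hneg (n : ℕ) : -(1 / ((n : ℝ) + 1)) < 0 := neg_neg_of_pos (by positivity)
  have hlim : Tendsto (fun n : ℕ => -(1 / ((n : ℝ) + 1))) atTop (𝓝 0) := by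
    simpa only [neg_zero] using (tendsto_one_div_add_atTop_nhds_zero_nat (𝕜 := ℝ)).neg
  obtain ⟨n, hn⟩ := exists_measure_pos_of_not_measure_iUnion_null
    ((iUnion_Iic_eq_Iio_of_lt_of_tendsto hneg hlim).symm ▸ hν)
  have hle : Aminus ν ≤ ((-(1 / ((n : ℝ) + 1)) : ℝ) : EReal) :=
    sInf_le (mem_image_of_mem _ ⟨hneg n, hn⟩)
  exact hle.trans_lt (EReal.coe_lt_coe_iff.2 (hneg n))

theorem Aplus_pos {ν : Measure ℝ} (hν : ν (Ioi 0) ≠ 0) : 0 < Aplus ν := by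
  have hpos (n : ℕ) : 0 < 1 / ((n : ℝ) + 1) := by positivity
  obtain ⟨n, hn⟩ := exists_measure_pos_of_not_measure_iUnion_null
    ((iUnion_Ici_eq_Ioi_of_lt_of_tendsto hpos tendsto_one_div_add_atTop_nhds_zero_nat).symm ▸ hν)
  have hle : ((1 / ((n : ℝ) + 1) : ℝ) : EReal) ≤ Aplus ν :=
    le_sSup (mem_image_of_mem _ ⟨hpos n, hn⟩)
  exact (EReal.coe_lt_coe_iff.2 (hpos n)).trans_le hle

theorem zero_mem_io_Aminus_Aplus {μm μp : Measure ℝ} [IsProbabilityMeasure μm]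
    [IsProbabilityMeasure μp] (hμm : μm (Ici 0) = 0) (hμp : μp (Iic 0) = 0) :
    (0 : ℝ) ∈ io (Aminus μm) (Aplus μp) := by
  have hAm : Aminus μm < 0 := Aminus_neg <| by
    rw [← compl_Ici, (prob_compl_eq_one_iff measurableSet_Ici).2 hμm]; exact one_ne_zero
  have hAp : 0 < Aplus μp := Aplus_pos <| by
    rw [← compl_Iic, (prob_compl_eq_one_iff measurableSet_Iic).2 hμp]; exact one_ne_zero
  exact ⟨by simpa using hAm, by simpa using hAp⟩

namespace PCLB

variable {b : ℝ → ℝ} {s : Set ℝ}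

theorem aemeasurable (hb : PCLB b s) (hs : MeasurableSet s) (μ : Measure ℝ)
    [NullSingletonClass μ] : AEMeasurable b (μ.restrict s) := by
  obtain ⟨⟨E, hE, hcont⟩, -⟩ := hb
  rw [← Measure.restrict_congr_set (sdiff_null_ae_eq_self (hE.measure_zero μ))]
  exact hcont.aemeasurable (hs.diff hE.measurableSet)

theorem integrableOn (hb : PCLB b s) (hs : MeasurableSet s) {K : Set ℝ} (hK : IsCompact K)
    (hKs : K ⊆ s) (μ : Measure ℝ) [NullSingletonClass μ] [IsLocallyFiniteMeasure μ] :
    IntegrableOn b K μ := by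
  obtain ⟨M, hM⟩ := hb.2 K hK hKs
  refine .of_bound hK.measure_lt_top
    ((hb.aemeasurable hs μ).mono_measure (Measure.restrict_mono hKs le_rfl)).aestronglyMeasurable
    M (ae_restrict_of_forall_mem hK.measurableSet hM)

theorem intervalIntegrable (hb : PCLB b s) (hs : MeasurableSet s) [s.OrdConnected] {x y : ℝ}
    (hx : x ∈ s) (hy : y ∈ s) (μ : Measure ℝ) [NullSingletonClass μ]
    [IsLocallyFiniteMeasure μ] : IntervalIntegrable b μ x y :=
  (hb.integrableOn hs isCompact_uIcc (OrdConnected.uIcc_subset ‹_› hx hy) μ).intervalIntegrable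

theorem continuousOn_Bint (hb : PCLB b s) (hs : IsOpen s) [s.OrdConnected] (h0 : 0 ∈ s) :
    ContinuousOn (Bint b) s := by
  intro x hx
  obtain ⟨ε, hε, hball⟩ := Metric.isOpen_iff.1 hs x hx
  have hnear : Icc (x - ε / 2) (x + ε / 2) ⊆ s := by
    rw [← Real.closedBall_eq_Icc]
    exact (Metric.closedBall_subset_ball (half_lt_self hε)).trans hball
  set u := min 0 (x - ε / 2)
  set v := max 0 (x + ε / 2)
  have hu : u ∈ s := min_rec' (· ∈ s) h0 (hnear ⟨le_rfl, by linarith⟩)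
  have hv : v ∈ s := max_rec' (· ∈ s) h0 (hnear ⟨by linarith, le_rfl⟩)
  have huv : u ≤ v := (min_le_left _ _).trans (le_max_left _ _)
  have hcont : ContinuousOn (Bint b) (uIcc u v) :=
    intervalIntegral.continuousOn_primitive_interval'
      (hb.intervalIntegrable hs.measurableSet hu hv volume)
      (by rw [uIcc_of_le huv]; exact ⟨min_le_left _ _, le_max_left _ _⟩)
  refine (hcont.continuousAt ?_).continuousWithinAt
  rw [uIcc_of_le huv]
  exact Icc_mem_nhds ((min_le_right _ _).trans_lt (by linarith))
    ((by linarith : x < x + ε / 2).trans_le (le_max_right _ _))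

end PCLB

theorem Bint_const_mul_add_const_mul {f g : ℝ → ℝ} {x : ℝ}
    (hf : IntervalIntegrable f volume 0 x) (hg : IntervalIntegrable g volume 0 x) (c d : ℝ) :
    Bint (fun y => c * f y + d * g y) x = c * Bint f x + d * Bint g x := by
  simp only [Bint, intervalIntegral.integral_add (hf.const_mul c) (hg.const_mul d),
    intervalIntegral.integral_const_mul]

theorem lintegral_le_mul_add_mul {α : Type*} [MeasurableSpace α] {μ : Measure α}
    {f g h : α → ℝ≥0∞} {c d : ℝ≥0∞} (hg : AEMeasurable g μ) (hh : AEMeasurable h μ)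
    (hf : ∀ᵐ x ∂μ, f x ≤ c * g x + d * h x) :
    ∫⁻ x, f x ∂μ ≤ c * ∫⁻ x, g x ∂μ + d * ∫⁻ x, h x ∂μ :=
  calc ∫⁻ x, f x ∂μ ≤ ∫⁻ x, c * g x + d * h x ∂μ := lintegral_mono_ae hf
    _ = c * ∫⁻ x, g x ∂μ + d * ∫⁻ x, h x ∂μ := by
      rw [lintegral_add_left' (hg.const_mul c), lintegral_const_mul'' c hg,
        lintegral_const_mul'' d hh]

theorem ofReal_mul_exp_convex {c t : ℝ} (hc : 0 ≤ c) (ht : t ∈ Icc (0 : ℝ) 1) (X Y : ℝ) :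
    ENNReal.ofReal (c * exp ((1 - t) * X + t * Y))
      ≤ ENNReal.ofReal (1 - t) * ENNReal.ofReal (c * exp X)
        + ENNReal.ofReal t * ENNReal.ofReal (c * exp Y) := by
  have h1t : 0 ≤ 1 - t := by linarith [ht.2]
  rw [← ENNReal.ofReal_mul h1t, ← ENNReal.ofReal_mul ht.1,
    ← ENNReal.ofReal_add (by positivity) (mul_nonneg ht.1 (by positivity))]
  refine ENNReal.ofReal_le_ofReal ?_
  have hexp := convexOn_exp.2 (mem_univ X) (mem_univ Y) h1t ht.1 (by ring)
  simp only [smul_eq_mul] at hexp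
  exact (mul_le_mul_of_nonneg_left hexp hc).trans_eq (by ring)

def greenTerm (D : ℝ) (f : ℝ → ℝ) (c a : ℝ) (S : Set ℝ) : ℝ≥0∞ :=
  ENNReal.ofReal (c * exp (-(2 / D) * Bint f a)) * ∫⁻ z in S, w D f z

def G1IntegrandNeg (D : ℝ) (μm μp : Measure ℝ) (f : ℝ → ℝ) (a : ℝ) : ℝ≥0∞ :=
  greenTerm D f (tailm μm a) a (io a (Aplus μp))

def G1IntegrandPos (D : ℝ) (μm μp : Measure ℝ) (f : ℝ → ℝ) (a : ℝ) : ℝ≥0∞ :=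
  greenTerm D f (tailp μp a) a (io (Aminus μm) a)

-- The binder of `∫⁻ a in s, _` extends over the following `+`, so in `G1` the second
-- integral lies inside the first one.
theorem G1_eq (D p : ℝ) (μm μp : Measure ℝ) (f : ℝ → ℝ) :
    G1 D p μm μp f = ENNReal.ofReal (1 - p) * ∫⁻ a in io (Aminus μm) 0,
      (G1IntegrandNeg D μm μp f a
        + ENNReal.ofReal p * ∫⁻ a' in io 0 (Aplus μp), G1IntegrandPos D μm μp f a') :=
  rfl

theorem ofReal_mul_exp_mul_w {c : ℝ} (hc : 0 ≤ c) (D : ℝ) (f : ℝ → ℝ) (a z : ℝ) :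
    ENNReal.ofReal (c * exp (-(2 / D) * Bint f a)) * w D f z
      = ENNReal.ofReal (c * exp ((2 / D) * (Bint f z - Bint f a))) := by
  rw [w, ← ENNReal.ofReal_mul (by positivity), mul_assoc, ← Real.exp_add]
  ring_nf

section Convexity

variable {D c t : ℝ} {b β : ℝ → ℝ}

theorem greenTerm_convex (hc : 0 ≤ c) (ht : t ∈ Icc (0 : ℝ) 1) {a : ℝ} {S : Set ℝ}
    (hS : MeasurableSet S)
    (hlin : ∀ x ∈ insert a S, Bint (fun y => (1 - t) * b y + t * β y) x
      = (1 - t) * Bint b x + t * Bint β x)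
    (hb : AEMeasurable (w D b) (volume.restrict S))
    (hβ : AEMeasurable (w D β) (volume.restrict S)) :
    greenTerm D (fun y => (1 - t) * b y + t * β y) c a S
      ≤ ENNReal.ofReal (1 - t) * greenTerm D b c a S
        + ENNReal.ofReal t * greenTerm D β c a S := by
  have hpull (f : ℝ → ℝ) : greenTerm D f c a S
      = ∫⁻ z in S, ENNReal.ofReal (c * exp (-(2 / D) * Bint f a)) * w D f z :=
    (lintegral_const_mul' _ _ ENNReal.ofReal_ne_top).symm
  rw [hpull, hpull, hpull]
  refine lintegral_le_mul_add_mul (hb.const_mul _) (hβ.const_mul _)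
    (ae_restrict_of_forall_mem hS fun z hz => ?_)
  simp only [ofReal_mul_exp_mul_w hc]
  rw [hlin a (mem_insert a S), hlin z (mem_insert_of_mem a hz)]
  convert ofReal_mul_exp_convex hc ht ((2 / D) * (Bint b z - Bint b a))
    ((2 / D) * (Bint β z - Bint β a)) using 4
  ring

variable {s : Set ℝ} (hs : IsOpen s) [s.OrdConnected] (h0 : 0 ∈ s)
include hs h0

theorem PCLB.aemeasurable_w (hb : PCLB b s) {S : Set ℝ} (hS : MeasurableSet S)
    (hSs : S ⊆ s) : AEMeasurable (w D b) (volume.restrict S) := by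
  have hB := (hb.continuousOn_Bint hs h0).mono hSs
  have hexp : ContinuousOn (fun z => exp ((2 / D) * Bint b z)) S := by fun_prop
  exact (hexp.aemeasurable hS).ennreal_ofReal

theorem PCLB.aemeasurable_greenTerm (hb : PCLB b s) {g : ℝ → ℝ} (hg : Measurable g)
    {S : ℝ → Set ℝ} (hS : Measurable fun a => ∫⁻ z in S a, w D b z) {T : Set ℝ}
    (hT : MeasurableSet T) (hTs : T ⊆ s) :
    AEMeasurable (fun a => greenTerm D b (g a) a (S a)) (volume.restrict T) := by
  have hB := (hb.continuousOn_Bint hs h0).mono hTs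
  have hexp : ContinuousOn (fun a => exp (-(2 / D) * Bint b a)) T := by fun_prop
  exact ((hg.aemeasurable.mul (hexp.aemeasurable hT)).ennreal_ofReal).mul hS.aemeasurable

theorem PCLB.greenTerm_convex (hb : PCLB b s) (hβ : PCLB β s) (hc : 0 ≤ c)
    (ht : t ∈ Icc (0 : ℝ) 1) {a : ℝ} (ha : a ∈ s) {S : Set ℝ} (hS : MeasurableSet S)
    (hSs : S ⊆ s) :
    greenTerm D (fun y => (1 - t) * b y + t * β y) c a S
      ≤ ENNReal.ofReal (1 - t) * greenTerm D b c a S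
        + ENNReal.ofReal t * greenTerm D β c a S :=
  DiffusiveSearch.greenTerm_convex hc ht hS
    (fun _ hx => Bint_const_mul_add_const_mul
      (hb.intervalIntegrable hs.measurableSet h0 (insert_subset ha hSs hx) volume)
      (hβ.intervalIntegrable hs.measurableSet h0 (insert_subset ha hSs hx) volume) _ _)
    (hb.aemeasurable_w hs h0 hS hSs) (hβ.aemeasurable_w hs h0 hS hSs)

end Convexity

section G1Integrands

variable (D : ℝ) {μm μp : Measure ℝ} {f b β : ℝ → ℝ} {t : ℝ}
  (h0 : (0 : ℝ) ∈ io (Aminus μm) (Aplus μp))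
include h0

theorem aemeasurable_G1IntegrandNeg (hf : PCLB f (io (Aminus μm) (Aplus μp))) :
    AEMeasurable (G1IntegrandNeg D μm μp f) (volume.restrict (io (Aminus μm) 0)) :=
  hf.aemeasurable_greenTerm (isOpen_io _ _) h0 (measurable_tailm μm)
    (Antitone.measurable_setLIntegral (io_anti_left _) _ _) measurableSet_io
    (io_subset_io le_rfl (by exact_mod_cast h0.2.le))

theorem aemeasurable_G1IntegrandPos (hf : PCLB f (io (Aminus μm) (Aplus μp))) :
    AEMeasurable (G1IntegrandPos D μm μp f) (volume.restrict (io 0 (Aplus μp))) :=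
  hf.aemeasurable_greenTerm (isOpen_io _ _) h0 (measurable_tailp μp)
    (Monotone.measurable_setLIntegral (io_mono_right _) _ _) measurableSet_io
    (io_subset_io (by exact_mod_cast h0.1.le) le_rfl)

theorem G1IntegrandNeg_convex (hb : PCLB b (io (Aminus μm) (Aplus μp)))
    (hβ : PCLB β (io (Aminus μm) (Aplus μp))) (ht : t ∈ Icc (0 : ℝ) 1) {a : ℝ}
    (ha : a ∈ io (Aminus μm) 0) :
    G1IntegrandNeg D μm μp (fun y => (1 - t) * b y + t * β y) a
      ≤ ENNReal.ofReal (1 - t) * G1IntegrandNeg D μm μp b a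
        + ENNReal.ofReal t * G1IntegrandNeg D μm μp β a :=
  hb.greenTerm_convex (isOpen_io _ _) h0 hβ (tailm_nonneg μm a) ht
    (io_subset_io le_rfl (by exact_mod_cast h0.2.le) ha) measurableSet_io
    (io_subset_io ha.1.le le_rfl)

theorem G1IntegrandPos_convex (hb : PCLB b (io (Aminus μm) (Aplus μp)))
    (hβ : PCLB β (io (Aminus μm) (Aplus μp))) (ht : t ∈ Icc (0 : ℝ) 1) {a : ℝ}
    (ha : a ∈ io 0 (Aplus μp)) :
    G1IntegrandPos D μm μp (fun y => (1 - t) * b y + t * β y) a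
      ≤ ENNReal.ofReal (1 - t) * G1IntegrandPos D μm μp b a
        + ENNReal.ofReal t * G1IntegrandPos D μm μp β a :=
  hb.greenTerm_convex (isOpen_io _ _) h0 hβ (tailp_nonneg μp a) ht
    (io_subset_io (by exact_mod_cast h0.1.le) le_rfl ha) measurableSet_io
    (io_subset_io le_rfl ha.2.le)

theorem lintegral_G1IntegrandPos_convex (hb : PCLB b (io (Aminus μm) (Aplus μp)))
    (hβ : PCLB β (io (Aminus μm) (Aplus μp))) (ht : t ∈ Icc (0 : ℝ) 1) :
    ∫⁻ a in io 0 (Aplus μp), G1IntegrandPos D μm μp (fun y => (1 - t) * b y + t * β y) a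
      ≤ ENNReal.ofReal (1 - t) * (∫⁻ a in io 0 (Aplus μp), G1IntegrandPos D μm μp b a)
        + ENNReal.ofReal t * ∫⁻ a in io 0 (Aplus μp), G1IntegrandPos D μm μp β a :=
  lintegral_le_mul_add_mul (aemeasurable_G1IntegrandPos D h0 hb)
    (aemeasurable_G1IntegrandPos D h0 hβ) (ae_restrict_of_forall_mem measurableSet_io
      fun _ ha => G1IntegrandPos_convex D h0 hb hβ ht ha)

theorem G1_integrand_convex (p : ℝ) (hb : PCLB b (io (Aminus μm) (Aplus μp)))
    (hβ : PCLB β (io (Aminus μm) (Aplus μp))) (ht : t ∈ Icc (0 : ℝ) 1) {a : ℝ}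
    (ha : a ∈ io (Aminus μm) 0) :
    G1IntegrandNeg D μm μp (fun y => (1 - t) * b y + t * β y) a
        + ENNReal.ofReal p * (∫⁻ a' in io 0 (Aplus μp),
          G1IntegrandPos D μm μp (fun y => (1 - t) * b y + t * β y) a')
      ≤ ENNReal.ofReal (1 - t) * (G1IntegrandNeg D μm μp b a
          + ENNReal.ofReal p * ∫⁻ a' in io 0 (Aplus μp), G1IntegrandPos D μm μp b a')
        + ENNReal.ofReal t * (G1IntegrandNeg D μm μp β a
          + ENNReal.ofReal p * ∫⁻ a' in io 0 (Aplus μp), G1IntegrandPos D μm μp β a') :=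
  (add_le_add (G1IntegrandNeg_convex D h0 hb hβ ht ha)
    (mul_le_mul_right (lintegral_G1IntegrandPos_convex D h0 hb hβ ht) _)).trans_eq (by ring)

end G1Integrands

theorem G1_convex_general
    (D p : ℝ)
    (μm μp : Measure ℝ) [IsProbabilityMeasure μm] [IsProbabilityMeasure μp]
    (hμm : μm (Ici 0) = 0) (hμp : μp (Iic 0) = 0)
    (b β : ℝ → ℝ)
    (hb : Admissible D (Aminus μm) (Aplus μp) b)
    (hβ : Admissible D (Aminus μm) (Aplus μp) β)
    (t : ℝ) (ht : t ∈ Icc (0:ℝ) 1) :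
    G1 D p μm μp (fun x => (1 - t) * b x + t * β x)
      ≤ ENNReal.ofReal (1 - t) * G1 D p μm μp b
        + ENNReal.ofReal t * G1 D p μm μp β := by
  have h0 := zero_mem_io_Aminus_Aplus hμm hμp
  rw [G1_eq, G1_eq, G1_eq]
  refine (mul_le_mul_right (lintegral_le_mul_add_mul
    ((aemeasurable_G1IntegrandNeg D h0 hb.1).add_const _)
    ((aemeasurable_G1IntegrandNeg D h0 hβ.1).add_const _)
    (ae_restrict_of_forall_mem measurableSet_io
      fun _ ha => G1_integrand_convex D h0 p hb.1 hβ.1 ht ha)) _).trans_eq (by ring)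

/-- convexity of `t ↦ G₁((1-t)b + tβ)` on `[0,1]`. -/
theorem G1_convex
    (D p : ℝ) (hD : 0 < D) (hp : 0 < p) (hp1 : p < 1)
    (μm μp : Measure ℝ) [IsProbabilityMeasure μm] [IsProbabilityMeasure μp]
    (hμm : μm (Ici 0) = 0) (hμp : μp (Iic 0) = 0)
    (b β : ℝ → ℝ)
    (hb : Admissible D (Aminus μm) (Aplus μp) b)
    (hβ : Admissible D (Aminus μm) (Aplus μp) β)
    (t : ℝ) (ht : t ∈ Icc (0:ℝ) 1) :
    G1 D p μm μp (fun x => (1 - t) * b x + t * β x)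
      ≤ ENNReal.ofReal (1 - t) * G1 D p μm μp b
        + ENNReal.ofReal t * G1 D p μm μp β :=
  G1_convex_general D p μm μp hμm hμp b β hb hβ t ht

end DiffusiveSearch
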